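/- Let R be a commutative ring with nonzero identity and I a proper nonzero non-prime ideal of R. Then Γ_I(R) is complemented if and only if exactly one of the following holds: (1) R/I ≅ ℤ₄ or R/I ≅ ℤ₂[X]/(X²), and |I| = 2; or (2) Γ(R/I) is complemented and I is a radical ideal of R. -/

import Mathlib

/-!
If `I` is radical, no coset `x + I ≠ I` squares into `I`, so `Γ_I(R)` is exactly the pullback
of `Γ(R/I)` along `R → R/I` and orthogonality transfers in both directions. Otherwise pick
`x ∉ I` with `x² ∈ I`. Every `x + i` with `0 ≠ i ∈ I` is adjacent to `x` and to any partner
`b ⊥ x`, which forces `I = {0, b - x}`; likewise every `c ∉ I` with `cx ∈ I` is `x` or `b`, so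
the annihilator of `t = x + I` in `R/I` is `{0, t}`. A ring with such a `t ≠ 0` is
`{0, t, 1, 1 + t}`: it is `ℤ/4` when `2 = t` and `𝔽₂[X]/(X²)` when `2 = 0`. Conversely, in that
situation every vertex of `Γ_I(R)` lies over `t`, and `x + i₀` is a partner of `x` for the
nonzero `i₀ ∈ I`.
-/

open Ideal Polynomial

-- The zero-divisor graph Γ(S): vertices are the nonzero zero-divisors,
-- distinct vertices adjacent iff their product is zero.  We realize it as a
-- graph on the whole ring whose adjacency relation encodes vertexhood.
def zdVertexSet (S : Type*) [CommRing S] : Set S :=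
  {x | x ≠ 0 ∧ ∃ y, y ≠ 0 ∧ x * y = 0}

def zdGraph (S : Type*) [CommRing S] : SimpleGraph S where
  Adj x y := x ≠ y ∧ x ≠ 0 ∧ y ≠ 0 ∧ x * y = 0
  symm := ⟨fun x y ⟨h1, h2, h3, h4⟩ => ⟨h1.symm, h3, h2, by rwa [mul_comm]⟩⟩
  loopless := ⟨fun x h => h.1 rfl⟩

-- The ideal-based zero-divisor graph Γ_I(R):
-- vertices {x ∈ R \ I : ∃ y ∈ R \ I, x*y ∈ I}, distinct x,y adjacent iff x*y ∈ I.
def idealVertexSet {R : Type*} [CommRing R] (I : Ideal R) : Set R :=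
  {x | x ∉ I ∧ ∃ y, y ∉ I ∧ x * y ∈ I}

def idealGraph {R : Type*} [CommRing R] (I : Ideal R) : SimpleGraph R where
  Adj x y := x ≠ y ∧ x ∉ I ∧ y ∉ I ∧ x * y ∈ I
  symm := ⟨fun x y ⟨h1, h2, h3, h4⟩ => ⟨h1.symm, h3, h2, by rwa [mul_comm]⟩⟩
  loopless := ⟨fun x h => h.1 rfl⟩

-- a ⊥ b : a and b are adjacent and no vertex is adjacent to both.
def Orth {V : Type*} (G : SimpleGraph V) (a b : V) : Prop :=
  G.Adj a b ∧ ∀ c, ¬(G.Adj a c ∧ G.Adj b c)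

-- a ~ b : a and b are nonadjacent with exactly the same neighbors.
def Sim {V : Type*} (G : SimpleGraph V) (a b : V) : Prop :=
  ¬G.Adj a b ∧ ∀ c, G.Adj a c ↔ G.Adj b c

-- A graph (with specified vertex set S) is complemented if every vertex has an
-- orthogonal partner.
def Complemented {V : Type*} (G : SimpleGraph V) (S : Set V) : Prop :=
  ∀ a ∈ S, ∃ b ∈ S, Orth G a b

def UniquelyComplemented {V : Type*} (G : SimpleGraph V) (S : Set V) : Prop :=
  Complemented G S ∧ ∀ a b c, Orth G a b → Orth G a c → Sim G b c

def AnnihilatorEqPair {S : Type*} [CommRing S] (t : S) : Prop :=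
  t ≠ 0 ∧ ∀ s, s * t = 0 ↔ s = 0 ∨ s = t

namespace AnnihilatorEqPair

variable {S : Type*} [CommRing S] {t : S}

theorem ne_zero (ht : AnnihilatorEqPair t) : t ≠ 0 := ht.1

theorem sq_eq_zero (ht : AnnihilatorEqPair t) : t ^ 2 = 0 := by
  rw [sq]; exact (ht.2 t).mpr (Or.inr rfl)

theorem eq_zero_or_eq_of_mul_eq_zero (ht : AnnihilatorEqPair t) {s : S} (hs : s * t = 0) :
    s = 0 ∨ s = t :=
  (ht.2 s).mp hs

theorem two_mul_eq_zero (ht : AnnihilatorEqPair t) : 2 * t = 0 := by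
  have htt : (t + t) * t = 0 := by rw [add_mul, ← sq, ht.sq_eq_zero, add_zero]
  rcases ht.eq_zero_or_eq_of_mul_eq_zero htt with h | h
  · rw [two_mul, h]
  · exact absurd (by linear_combination h) ht.ne_zero

theorem two_eq_zero_or_eq (ht : AnnihilatorEqPair t) : (2 : S) = 0 ∨ (2 : S) = t :=
  ht.eq_zero_or_eq_of_mul_eq_zero ht.two_mul_eq_zero

-- `s * t` lies in the annihilator `{0, t}`, and `s * t = t` puts `s - 1` in it.
theorem eq_zero_or_eq_or_eq_one_or_eq_one_add (ht : AnnihilatorEqPair t) (s : S) :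
    s = 0 ∨ s = t ∨ s = 1 ∨ s = 1 + t := by
  have hst : s * t * t = 0 := by rw [mul_assoc, ← sq, ht.sq_eq_zero, mul_zero]
  rcases ht.eq_zero_or_eq_of_mul_eq_zero hst with h | h
  · exact (ht.eq_zero_or_eq_of_mul_eq_zero h).imp_right Or.inl
  · have h1 : (s - 1) * t = 0 := by rw [sub_mul, h, one_mul, sub_self]
    rcases ht.eq_zero_or_eq_of_mul_eq_zero h1 with h' | h'
    · exact Or.inr (Or.inr (Or.inl (by linear_combination h')))
    · exact Or.inr (Or.inr (Or.inr (by linear_combination h')))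

theorem isUnit_of_ne (ht : AnnihilatorEqPair t) {s : S} (hs0 : s ≠ 0) (hst : s ≠ t) :
    IsUnit s := by
  rcases ht.eq_zero_or_eq_or_eq_one_or_eq_one_add s with h | h | h | h
  · exact absurd h hs0
  · exact absurd h hst
  · exact h ▸ isUnit_one
  · exact IsUnit.of_mul_eq_one (1 - t) (by rw [h]; linear_combination -ht.sq_eq_zero)

theorem eq_of_mul_eq_zero (ht : AnnihilatorEqPair t) {z w : S} (hz : z ≠ 0) (hw : w ≠ 0)
    (hzw : z * w = 0) : z = t := by
  by_contra hzt
  exact hw ((ht.isUnit_of_ne hz hzt).mul_right_eq_zero.mp hzw)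

theorem map_ringEquiv {T : Type*} [CommRing T] (ht : AnnihilatorEqPair t) (e : S ≃+* T) :
    AnnihilatorEqPair (e t) := by
  refine ⟨(map_ne_zero_iff e e.injective).mpr ht.ne_zero, fun s => ?_⟩
  rw [← e.apply_symm_apply s, ← map_mul, map_eq_zero_iff e e.injective, ht.2,
    map_eq_zero_iff e e.injective, e.injective.eq_iff]

theorem injective_of_map_ne_zero {T : Type*} [Semiring T] (ht : AnnihilatorEqPair t)
    (f : S →+* T) (hf : f t ≠ 0) : Function.Injective f := by
  have : Nontrivial T := nontrivial_of_ne _ _ hf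
  refine (injective_iff_map_eq_zero f).mpr fun s hs => ?_
  by_contra hs0
  have hst : s ≠ t := fun h => hf (h ▸ hs)
  exact ((ht.isUnit_of_ne hs0 hst).map f).ne_zero hs

theorem surjective_of_map_eq {A : Type*} [Semiring A] (ht : AnnihilatorEqPair t)
    (f : A →+* S) {a : A} (ha : f a = t) : Function.Surjective f := by
  intro s
  rcases ht.eq_zero_or_eq_or_eq_one_or_eq_one_add s with rfl | rfl | rfl | rfl
  · exact ⟨0, map_zero f⟩
  · exact ⟨a, ha⟩
  · exact ⟨1, map_one f⟩
  · exact ⟨1 + a, by rw [map_add, map_one, ha]⟩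

theorem bijective_of_map_eq {A : Type*} [CommRing A] {a : A} (ha : AnnihilatorEqPair a)
    (ht : AnnihilatorEqPair t) (f : A →+* S) (hf : f a = t) : Function.Bijective f :=
  ⟨ha.injective_of_map_ne_zero f (hf ▸ ht.ne_zero), ht.surjective_of_map_eq f hf⟩

end AnnihilatorEqPair

theorem annihilatorEqPair_two_zmod_four : AnnihilatorEqPair (2 : ZMod 4) :=
  ⟨by decide, by decide⟩

theorem annihilatorEqPair_X_quotient_X_sq :
    AnnihilatorEqPair (Ideal.Quotient.mk (span {(X : (ZMod 2)[X]) ^ 2}) X) := by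
  have hmk (p : (ZMod 2)[X]) : Ideal.Quotient.mk (span {X ^ 2}) p = 0 ↔ X ^ 2 ∣ p := by
    rw [Ideal.Quotient.eq_zero_iff_mem, Ideal.mem_span_singleton]
  refine ⟨?_, fun s => ?_⟩
  · rw [Ne, hmk]
    intro h
    simpa using Polynomial.natDegree_le_of_dvd h X_ne_zero
  obtain ⟨p, rfl⟩ := Ideal.Quotient.mk_surjective s
  rw [← map_mul, hmk, Ideal.Quotient.mk_eq_mk_iff_sub_mem, Ideal.mem_span_singleton, hmk]
  constructor
  · intro h
    obtain ⟨q, rfl⟩ : X ∣ p := (mul_dvd_mul_iff_right X_ne_zero).mp (by rwa [← sq])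
    have hq := X_mul_divX_add q
    rcases (by decide : ∀ a : ZMod 2, a = 0 ∨ a = 1) (q.coeff 0) with h0 | h1
    · rw [h0, map_zero, add_zero] at hq
      exact Or.inl ⟨q.divX, by linear_combination -X * hq⟩
    · rw [h1, map_one] at hq
      exact Or.inr ⟨q.divX, by linear_combination -X * hq⟩
  · rintro (⟨q, rfl⟩ | ⟨q, hq⟩)
    · exact ⟨q * X, by ring⟩
    · exact ⟨1 + X * q, by linear_combination X * hq⟩

theorem AnnihilatorEqPair.nonempty_ringEquiv_zmod_four {S : Type*} [CommRing S] {t : S}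
    (ht : AnnihilatorEqPair t) (h2 : (2 : S) = t) : Nonempty (S ≃+* ZMod 4) := by
  have h4 : ((4 : ℕ) : S) = 0 := by
    rw [show ((4 : ℕ) : S) = 2 * 2 by norm_num, h2, ← sq, ht.sq_eq_zero]
  let f : ZMod 4 →+* S := ZMod.castHom (ringChar.dvd h4) S
  have hf : f 2 = t := by rw [map_ofNat, h2]
  exact ⟨(RingEquiv.ofBijective f
    (annihilatorEqPair_two_zmod_four.bijective_of_map_eq ht f hf)).symm⟩

theorem AnnihilatorEqPair.nonempty_ringEquiv_quotient_X_sq {S : Type*} [CommRing S] {t : S}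
    (ht : AnnihilatorEqPair t) (h2 : (2 : S) = 0) :
    Nonempty (S ≃+* (ZMod 2)[X] ⧸ span {(X : (ZMod 2)[X]) ^ 2}) := by
  let g : (ZMod 2)[X] →+* S :=
    eval₂RingHom (ZMod.castHom (ringChar.dvd (by exact_mod_cast h2 : ((2 : ℕ) : S) = 0)) S) t
  have hg : g X = t := eval₂_X _ _
  have hker : ∀ p ∈ span {(X : (ZMod 2)[X]) ^ 2}, g p = 0 := by
    intro p hp
    obtain ⟨q, rfl⟩ := Ideal.mem_span_singleton.mp hp
    rw [map_mul, map_pow, hg, ht.sq_eq_zero, zero_mul]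
  let f := Ideal.Quotient.lift _ g hker
  have hf : f (Ideal.Quotient.mk _ X) = t := by rw [Ideal.Quotient.lift_mk, hg]
  exact ⟨(RingEquiv.ofBijective f
    (annihilatorEqPair_X_quotient_X_sq.bijective_of_map_eq ht f hf)).symm⟩

theorem nonempty_ringEquiv_iff_exists_annihilatorEqPair {S : Type*} [CommRing S] :
    (Nonempty (S ≃+* ZMod 4) ∨
        Nonempty (S ≃+* (ZMod 2)[X] ⧸ span {(X : (ZMod 2)[X]) ^ 2})) ↔
      ∃ t : S, AnnihilatorEqPair t := by
  constructor
  · rintro (⟨⟨e⟩⟩ | ⟨⟨e⟩⟩)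
    · exact ⟨_, annihilatorEqPair_two_zmod_four.map_ringEquiv e.symm⟩
    · exact ⟨_, annihilatorEqPair_X_quotient_X_sq.map_ringEquiv e.symm⟩
  · rintro ⟨t, ht⟩
    rcases ht.two_eq_zero_or_eq with h2 | h2
    · exact Or.inr (ht.nonempty_ringEquiv_quotient_X_sq h2)
    · exact Or.inl (ht.nonempty_ringEquiv_zmod_four h2)

theorem Submodule.natCard_eq_two_iff {R M : Type*} [Semiring R] [AddCommMonoid M] [Module R M]
    (N : Submodule R M) :
    Nat.card N = 2 ↔ ∃ n₀ ∈ N, n₀ ≠ 0 ∧ ∀ n ∈ N, n = 0 ∨ n = n₀ := by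
  rw [Nat.card_eq_two_iff' (0 : N)]
  constructor
  · rintro ⟨⟨n₀, hn₀⟩, hne, huniq⟩
    refine ⟨n₀, hn₀, fun h => hne (Subtype.ext h), fun n hn => ?_⟩
    refine or_iff_not_imp_left.mpr fun h0 => ?_
    exact congrArg Subtype.val (huniq ⟨n, hn⟩ fun h => h0 (congrArg Subtype.val h))
  · rintro ⟨n₀, hn₀, hne, hN⟩
    exact ⟨⟨n₀, hn₀⟩, fun h => hne (congrArg Subtype.val h),
      fun ⟨n, hn⟩ h => Subtype.ext ((hN n hn).resolve_left fun h0 => h (Subtype.ext h0))⟩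

section Graph

variable {V W : Type*} {G : SimpleGraph W} {f : V → W}

theorem orth_comap_iff (hf : Function.Surjective f) {a b : V} :
    Orth (G.comap f) a b ↔ Orth G (f a) (f b) := by
  simp only [Orth, SimpleGraph.comap_adj, hf.forall]

theorem complemented_comap_iff (hf : Function.Surjective f) {S : Set W} :
    Complemented (G.comap f) (f ⁻¹' S) ↔ Complemented G S := by
  simp only [Complemented, Set.mem_preimage, orth_comap_iff hf, hf.forall, hf.exists]

end Graph

section IdealGraph

variable {R : Type*} [CommRing R] {I : Ideal R}

theorem idealVertexSet_eq_preimage (I : Ideal R) :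
    idealVertexSet I = Ideal.Quotient.mk I ⁻¹' zdVertexSet (R ⧸ I) := by
  ext x
  simp only [idealVertexSet, zdVertexSet, Set.mem_ofPred_eq, Set.mem_preimage, Ne,
    Ideal.Quotient.eq_zero_iff_mem, Ideal.Quotient.mk_surjective.exists, ← map_mul]

theorem idealGraph_eq_comap (hI : I.IsRadical) :
    idealGraph I = (zdGraph (R ⧸ I)).comap (Ideal.Quotient.mk I) := by
  ext x y
  simp only [idealGraph, zdGraph, SimpleGraph.comap_adj, Ne, Ideal.Quotient.eq_zero_iff_mem,
    ← map_mul, Ideal.Quotient.mk_eq_mk_iff_sub_mem]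
  refine ⟨fun ⟨_, hx, hy, hxy⟩ => ⟨fun hsub => hx (hI ?_), hx, hy, hxy⟩,
    fun ⟨hsub, hx, hy, hxy⟩ => ⟨?_, hx, hy, hxy⟩⟩
  · have hxx : x * x = x * y + x * (x - y) := by ring
    exact ⟨2, by rw [sq, hxx]; exact I.add_mem hxy (I.mul_mem_left x hsub)⟩
  · rintro rfl
    simp at hsub

theorem complemented_idealGraph_iff_of_isRadical (hI : I.IsRadical) :
    Complemented (idealGraph I) (idealVertexSet I) ↔
      Complemented (zdGraph (R ⧸ I)) (zdVertexSet (R ⧸ I)) := by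
  rw [idealGraph_eq_comap hI, idealVertexSet_eq_preimage]
  exact complemented_comap_iff Ideal.Quotient.mk_surjective

theorem eq_or_eq_of_orth_idealGraph {a b c : R} (h : Orth (idealGraph I) a b) (hc : c ∉ I)
    (hca : c * a ∈ I) (hcb : c * b ∈ I) : c = a ∨ c = b := by
  by_contra! hne
  obtain ⟨⟨-, ha, hb, -⟩, hcommon⟩ := h
  exact hcommon c
    ⟨⟨hne.1.symm, ha, hc, by rwa [mul_comm]⟩, ⟨hne.2.symm, hb, hc, by rwa [mul_comm]⟩⟩

theorem mem_eq_zero_or_eq_sub_of_orth {x b : R} (hxI : x ∉ I) (hx2 : x ^ 2 ∈ I)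
    (h : Orth (idealGraph I) x b) {i : R} (hi : i ∈ I) : i = 0 ∨ i = b - x := by
  have hxb : x * b ∈ I := h.1.2.2.2
  have hne : x + i ∉ I := fun h' => hxI (by simpa using I.sub_mem h' hi)
  have hx : (x + i) * x ∈ I := by
    rw [add_mul, ← sq]; exact I.add_mem hx2 (I.mul_mem_right x hi)
  have hb : (x + i) * b ∈ I := by
    rw [add_mul]; exact I.add_mem hxb (I.mul_mem_right b hi)
  rcases eq_or_eq_of_orth_idealGraph h hne hx hb with h' | h'
  · exact Or.inl (by simpa using h')
  · exact Or.inr (by rw [← h']; ring)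

theorem annihilatorEqPair_and_card_eq_two_of_complemented (hI0 : I ≠ ⊥)
    (hc : Complemented (idealGraph I) (idealVertexSet I)) {x : R} (hxI : x ∉ I)
    (hx2 : x ^ 2 ∈ I) :
    AnnihilatorEqPair (Ideal.Quotient.mk I x) ∧ Nat.card I = 2 := by
  obtain ⟨b, -, h⟩ := hc x ⟨hxI, x, hxI, by rwa [← sq]⟩
  have hI (i : R) (hi : i ∈ I) : i = 0 ∨ i = b - x := mem_eq_zero_or_eq_sub_of_orth hxI hx2 h hi
  have hbx : b - x ∈ I := by
    obtain ⟨i, hi, hi0⟩ := Submodule.exists_mem_ne_zero_of_ne_bot hI0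
    exact (hI i hi).resolve_left hi0 ▸ hi
  refine ⟨⟨fun h0 => hxI (Ideal.Quotient.eq_zero_iff_mem.mp h0), fun s => ?_⟩, ?_⟩
  · obtain ⟨c, rfl⟩ := Ideal.Quotient.mk_surjective s
    rw [← map_mul, Ideal.Quotient.eq_zero_iff_mem, Ideal.Quotient.eq_zero_iff_mem,
      Ideal.Quotient.mk_eq_mk_iff_sub_mem]
    constructor
    · intro hcx
      by_cases hcI : c ∈ I
      · exact Or.inl hcI
      have hcb : c * b ∈ I := by
        rw [show c * b = c * x + c * (b - x) by ring]; exact I.add_mem hcx (I.mul_mem_left c hbx)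
      rcases eq_or_eq_of_orth_idealGraph h hcI hcx hcb with rfl | rfl
      · simp
      · exact Or.inr hbx
    · rintro (hcI | hcx)
      · exact I.mul_mem_right x hcI
      · rw [show c * x = (c - x) * x + x ^ 2 by ring]; exact I.add_mem (I.mul_mem_right x hcx) hx2
  · exact I.natCard_eq_two_iff.mpr ⟨b - x, hbx, sub_ne_zero.mpr h.1.1.symm, hI⟩

theorem complemented_idealGraph_of_annihilatorEqPair {t : R ⧸ I} (ht : AnnihilatorEqPair t)
    (hcard : Nat.card I = 2) : Complemented (idealGraph I) (idealVertexSet I) := by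
  obtain ⟨i₀, hi₀, hi₀0, hI⟩ := I.natCard_eq_two_iff.mp hcard
  have mk_eq {c y : R} (hc : c ∉ I) (hy : y ∉ I) (hcy : c * y ∈ I) :
      Ideal.Quotient.mk I c = t :=
    ht.eq_of_mul_eq_zero (mt Ideal.Quotient.eq_zero_iff_mem.mp hc)
      (mt Ideal.Quotient.eq_zero_iff_mem.mp hy)
      (by rwa [← map_mul, Ideal.Quotient.eq_zero_iff_mem])
  rintro x ⟨hxI, y, hyI, hxy⟩
  have hx : Ideal.Quotient.mk I x = t := mk_eq hxI hyI hxy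
  have hx2 : x * x ∈ I := by
    rw [← Ideal.Quotient.eq_zero_iff_mem, map_mul, hx, ← sq, ht.sq_eq_zero]
  have hbI : x + i₀ ∉ I := fun h => hxI (by simpa using I.sub_mem h hi₀)
  have hxb : x * (x + i₀) ∈ I := by rw [mul_add]; exact I.add_mem hx2 (I.mul_mem_left x hi₀)
  have hne : x ≠ x + i₀ := by simpa [eq_comm] using hi₀0
  refine ⟨x + i₀, ⟨hbI, x, hxI, by rwa [mul_comm]⟩, ⟨hne, hxI, hbI, hxb⟩, ?_⟩
  rintro c ⟨⟨hxc, -, hcI, hxc'⟩, ⟨hbc, -, -, -⟩⟩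
  have hcx : c - x ∈ I := by
    rw [← Ideal.Quotient.mk_eq_mk_iff_sub_mem, hx]
    exact mk_eq hcI hxI (by rwa [mul_comm] at hxc')
  rcases hI _ hcx with h | h
  · exact hxc (sub_eq_zero.mp h).symm
  · exact hbc (by rw [← h]; ring)

theorem complemented_idealGraph_iff_of_sq_mem (hI0 : I ≠ ⊥) {x : R} (hxI : x ∉ I)
    (hx2 : x ^ 2 ∈ I) :
    Complemented (idealGraph I) (idealVertexSet I) ↔
      (∃ t : R ⧸ I, AnnihilatorEqPair t) ∧ Nat.card I = 2 :=
  ⟨fun hc => (annihilatorEqPair_and_card_eq_two_of_complemented hI0 hc hxI hx2).imp_left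
      fun ht => ⟨_, ht⟩,
    fun ⟨⟨_, ht⟩, hcard⟩ => complemented_idealGraph_of_annihilatorEqPair ht hcard⟩

end IdealGraph

theorem stmt10_general {R : Type*} [CommRing R] (I : Ideal R)
    (hI0 : I ≠ ⊥) :
    Complemented (idealGraph I) (idealVertexSet I) ↔
      Xor'
        ((Nonempty ((R ⧸ I) ≃+* ZMod 4) ∨
            Nonempty ((R ⧸ I) ≃+*
              (Polynomial (ZMod 2) ⧸ Ideal.span {(X : Polynomial (ZMod 2)) ^ 2}))) ∧
          Nat.card I = 2)
        (Complemented (zdGraph (R ⧸ I)) (zdVertexSet (R ⧸ I)) ∧ I.radical = I) := by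
  rw [nonempty_ringEquiv_iff_exists_annihilatorEqPair, Ideal.radical_eq_iff]
  -- `Xor'` is a deprecated alias of `Xor` that `simp` does not unfold.
  change _ ↔ Xor _ _
  by_cases hrad : I.IsRadical
  · have : IsReduced (R ⧸ I) := (Ideal.isRadical_iff_quotient_reduced I).mp hrad
    have hno : ¬ ∃ t : R ⧸ I, AnnihilatorEqPair t := fun ⟨t, ht⟩ =>
      ht.ne_zero (IsReduced.eq_zero t ⟨2, ht.sq_eq_zero⟩)
    simp [xor_def, complemented_idealGraph_iff_of_isRadical hrad, hno, hrad]
  · obtain ⟨x, hx2, hxI⟩ : ∃ x, x ^ 2 ∈ I ∧ x ∉ I := by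
      simpa [Ideal.isRadical_iff_pow_one_lt 2 one_lt_two] using hrad
    simp [xor_def, complemented_idealGraph_iff_of_sq_mem hI0 hxI hx2, hrad]

theorem stmt10 {R : Type*} [CommRing R] [Nontrivial R] (I : Ideal R)
    (hI : I ≠ ⊤) (hI0 : I ≠ ⊥) (hIp : ¬ I.IsPrime) :
    Complemented (idealGraph I) (idealVertexSet I) ↔
      Xor'
        ((Nonempty ((R ⧸ I) ≃+* ZMod 4) ∨
            Nonempty ((R ⧸ I) ≃+*
              (Polynomial (ZMod 2) ⧸ Ideal.span {(X : Polynomial (ZMod 2)) ^ 2}))) ∧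
          Nat.card I = 2)
        (Complemented (zdGraph (R ⧸ I)) (zdVertexSet (R ⧸ I)) ∧ I.radical = I) :=
  stmt10_general I hI0
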